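/- arXiv:2605.11949 — 3 statements merged into one kernel-verified Lean document; each statement's English description precedes it below -/
import Mathlib

section
/- Let H be a tk-uniform hypergraph (t ≥ 2, k ≥ 2) such that: (a) any two distinct edges of H intersect in at most k vertices, and (b) H is (ℓ·tk - (ℓ-1)k - 1, ℓ)-free for all 2 ≤ ℓ ≤ 2t+2. Suppose there exist distinct subfamilies 𝒜, ℬ ⊆ H with |𝒜| = |ℬ| = t+1 and ∪𝒜 = ∪ℬ, and let p = |𝒜 ∩ ℬ|. Then p ≥ t - 1/(t-1), i.e., either p = t, or t = 2 and p = 1. -/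
/-! `𝒜 ∪ ℬ` consists of `2t + 2 - p` edges whose union is `⋃ 𝒜`, a set of at most `(t + 1)tk`
vertices, while freeness forces at least `(2t + 2 - p)tk - (2t + 1 - p)k` vertices. Writing
`d = t + 1 - p = |ℬ \ 𝒜|` and dividing by `k`, this says `dt ≤ t + d`, i.e. `(d - 1)(t - 1) ≤ 1`:
either `d = 1` (so `p = t`) or `d = t = 2` (so `p = 1`). -/

open Finset

theorem card_sup_id_le_card_mul {α : Type*} [DecidableEq α] {𝒜 : Finset (Finset α)} {m : ℕ}
    (h : ∀ A ∈ 𝒜, A.card ≤ m) : (𝒜.sup id).card ≤ 𝒜.card * m := by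
  rw [sup_eq_biUnion]
  exact card_biUnion_le_card_mul 𝒜 id m h

theorem card_inter_lt_of_ne_of_card_eq {α : Type*} [DecidableEq α] {s t : Finset α}
    (hne : s ≠ t) (hcard : s.card = t.card) : (s ∩ t).card < s.card := by
  refine (card_le_card inter_subset_left).lt_of_ne fun h => hne ?_
  have hst : s ⊆ t := (eq_of_subset_of_card_le inter_subset_left h.ge) ▸ inter_subset_right
  exact eq_of_subset_of_card_le hst hcard.ge

theorem mul_le_add_of_mul_sub_mul_le {t d k : ℕ} (hk : 0 < k)
    (h : (t + 1 + d) * (t * k) - (t + 1 + d - 1) * k ≤ (t + 1) * (t * k)) :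
    d * t ≤ t + d := by
  rw [show t + 1 + d - 1 = t + d by omega, Nat.sub_le_iff_le_add] at h
  refine Nat.le_of_mul_le_mul_right ?_ hk
  nlinarith

theorem Nat.eq_two_and_eq_two_of_mul_le_add {a b : ℕ} (ha : 2 ≤ a) (hb : 2 ≤ b)
    (h : a * b ≤ b + a) : a = 2 ∧ b = 2 := by
  have : (a - 2) * (b - 2) + (a - 2) + (b - 2) ≤ 0 := by
    obtain ⟨a, rfl⟩ := Nat.exists_eq_add_of_le ha
    obtain ⟨b, rfl⟩ := Nat.exists_eq_add_of_le hb
    simp only [Nat.add_sub_cancel_left]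
    nlinarith
  omega

theorem intersection_size_bound_general {V : Type*} [DecidableEq V]
    (H : Finset (Finset V)) (t k : ℕ) (ht : 2 ≤ t) (hk : 2 ≤ k)
    (huniform : ∀ A ∈ H, A.card = t * k)
    (hfree : ∀ ℓ : ℕ, 2 ≤ ℓ → ℓ ≤ 2 * t + 2 → ∀ S ⊆ H, S.card = ℓ →
      ℓ * (t * k) - (ℓ - 1) * k ≤ (S.sup id).card)
    (𝒜 ℬ : Finset (Finset V)) (h𝒜 : 𝒜 ⊆ H) (hℬ : ℬ ⊆ H)
    (hne : 𝒜 ≠ ℬ) (hcard𝒜 : 𝒜.card = t + 1) (hcardℬ : ℬ.card = t + 1)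
    (hunion : 𝒜.sup id = ℬ.sup id) :
    (𝒜 ∩ ℬ).card = t ∨ (t = 2 ∧ (𝒜 ∩ ℬ).card = 1) := by
  have hp := card_inter_lt_of_ne_of_card_eq hne (hcard𝒜.trans hcardℬ.symm)
  set d := t + 1 - (𝒜 ∩ ℬ).card
  have hunion_card : (𝒜 ∪ ℬ).card = t + 1 + d := by
    have := card_union_add_card_inter 𝒜 ℬ
    omega
  have hlower := hfree _ (by omega) (by omega) _ (union_subset h𝒜 hℬ) hunion_card
  rw [sup_union, hunion, sup_idem] at hlower
  have hupper : (ℬ.sup id).card ≤ (t + 1) * (t * k) :=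
    hcardℬ ▸ card_sup_id_le_card_mul fun A hA => (huniform A (hℬ hA)).le
  have hdt := mul_le_add_of_mul_sub_mul_le (by omega) (hlower.trans hupper)
  obtain hd1 | hd2 : d = 1 ∨ 2 ≤ d := by omega
  · left; omega
  · obtain ⟨hd, rfl⟩ := Nat.eq_two_and_eq_two_of_mul_le_add hd2 ht hdt
    right; omega

/-- Let `H` be a `tk`-uniform hypergraph such that any two distinct edges intersect
in at most `k` vertices and `H` is `(ℓ·tk - (ℓ-1)k - 1, ℓ)`-free for all
`2 ≤ ℓ ≤ 2t+2`. If `𝒜 ≠ ℬ` are subfamilies of `H` of size `t+1` each with equal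
unions, and `p = |𝒜 ∩ ℬ|`, then either `p = t`, or `t = 2` and `p = 1`. -/
theorem intersection_size_bound {V : Type*} [DecidableEq V]
    (H : Finset (Finset V)) (t k : ℕ) (ht : 2 ≤ t) (hk : 2 ≤ k)
    (huniform : ∀ A ∈ H, A.card = t * k)
    (hint : ∀ A ∈ H, ∀ B ∈ H, A ≠ B → (A ∩ B).card ≤ k)
    (hfree : ∀ ℓ : ℕ, 2 ≤ ℓ → ℓ ≤ 2 * t + 2 → ∀ S ⊆ H, S.card = ℓ →
      ℓ * (t * k) - (ℓ - 1) * k ≤ (S.sup id).card)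
    (𝒜 ℬ : Finset (Finset V)) (h𝒜 : 𝒜 ⊆ H) (hℬ : ℬ ⊆ H)
    (hne : 𝒜 ≠ ℬ) (hcard𝒜 : 𝒜.card = t + 1) (hcardℬ : ℬ.card = t + 1)
    (hunion : 𝒜.sup id = ℬ.sup id) :
    (𝒜 ∩ ℬ).card = t ∨ (t = 2 ∧ (𝒜 ∩ ℬ).card = 1) :=
  intersection_size_bound_general H t k ht hk huniform hfree 𝒜 ℬ h𝒜 hℬ hne hcard𝒜 hcardℬ hunion
end

section
/- Let H be a 2k-uniform hypergraph that is (3·2k - 2k - 1, 3)-free, i.e., any 3 distinct edges have union of size at least 4k. If C, A, B are three distinct edges of H with the symmetric difference A Δ B contained in C ∪ D for some edge D, |A ∩ B| = k (so |A Δ B| = 2k), and |D ∩ (A Δ B)| ≤ k - 1, then |C ∩ (A Δ B)| ≥ k+1, and consequently |C ∪ A ∪ B| ≤ 4k - 1, contradicting the freeness. Formally: under these hypotheses, no such configuration exists. -/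
/-!
The symmetric difference `A Δ B` has `2k` elements and `D` covers at most `k - 1` of them, so
`C` meets `A ∪ B` in at least `k + 1` points; inclusion–exclusion with `|C| = 2k` and
`|A ∪ B| = 3k` then gives `|C ∪ A ∪ B| ≤ 5k - (k + 1)`.
-/

namespace Finset

variable {α : Type*} [DecidableEq α]

theorem card_symmDiff_add_two_mul_card_inter (s t : Finset α) :
    (symmDiff s t).card + 2 * (s ∩ t).card = s.card + t.card := by
  have h_sdiff : (symmDiff s t).card = (s ∪ t).card - (s ∩ t).card := by
    rw [symmDiff_eq_sup_sdiff_inf]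
    exact card_sdiff_of_subset inter_subset_union
  have h_inter_le : (s ∩ t).card ≤ (s ∪ t).card := card_le_card inter_subset_union
  have := card_union_add_card_inter s t
  omega

theorem card_le_card_inter_add_card_inter_of_subset_union {s t u : Finset α} (h : s ⊆ t ∪ u) :
    s.card ≤ (t ∩ s).card + (u ∩ s).card := by
  calc s.card = ((t ∪ u) ∩ s).card := by rw [inter_eq_right.mpr h]
    _ = (t ∩ s ∪ u ∩ s).card := by rw [union_inter_distrib_right]
    _ ≤ (t ∩ s).card + (u ∩ s).card := card_union_le _ _

end Finset

open Finset in
theorem symmdiff_cover_bound_general {V : Type*} [DecidableEq V]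
    (k : ℕ) (A B C D : Finset V)
    (hA : A.card = 2 * k) (hB : B.card = 2 * k) (hC : C.card = 2 * k)
    (hAB : (A ∩ B).card = k)
    (hsub : symmDiff A B ⊆ C ∪ D)
    (hD : (D ∩ symmDiff A B).card ≤ k - 1) :
    (C ∪ A ∪ B).card ≤ 4 * k - 1 := by
  have h_symmDiff := card_symmDiff_add_two_mul_card_inter A B
  have h_cover := card_le_card_inter_add_card_inter_of_subset_union hsub
  have h_meet : (C ∩ symmDiff A B).card ≤ (C ∩ (A ∪ B)).card :=
    card_le_card (inter_subset_inter_left symmDiff_le_sup)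
  have h_AB := card_union_add_card_inter A B
  have h_CAB := card_union_add_card_inter C (A ∪ B)
  rw [union_assoc]
  omega

/-- If `|A| = |B| = |C| = 2k`, `|A ∩ B| = k`, `A Δ B ⊆ C ∪ D`, and
`|D ∩ (A Δ B)| ≤ k - 1`, then `|C ∪ A ∪ B| ≤ 4k - 1`. -/
theorem symmdiff_cover_bound {V : Type*} [DecidableEq V]
    (k : ℕ) (hk : 2 ≤ k) (A B C D : Finset V)
    (hA : A.card = 2 * k) (hB : B.card = 2 * k) (hC : C.card = 2 * k)
    (hAB : (A ∩ B).card = k)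
    (hsub : symmDiff A B ⊆ C ∪ D)
    (hD : (D ∩ symmDiff A B).card ≤ k - 1) :
    (C ∪ A ∪ B).card ≤ 4 * k - 1 :=
  symmdiff_cover_bound_general k A B C D hA hB hC hAB hsub hD
end

section
/- Let H be a 2k-uniform hypergraph on a finite vertex set such that H is (6k-1, 5)-free (any 5 distinct edges have union of size ≥ 6k) and (5k-1, 4)-free (any 4 distinct edges have union of size ≥ 5k). Then there do not exist five distinct edges C, A1, A2, B1, B2 of H with C ∪ A1 ∪ A2 = C ∪ B1 ∪ B2. -/
/-!
Since `C ∪ A1 ∪ A2 = C ∪ B1 ∪ B2` is the union of all five edges, `(6k-1,5)`-freeness gives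
`6k ≤ |C ∪ A1 ∪ A2| ≤ |C| + |A1| + |A2| = 6k`. Equality forces `C` to be disjoint from `A1 ∪ A2`
(and, by the same count, from `B1 ∪ B2`) with `|A1 ∪ A2| = 4k`. Cancelling `C` gives
`A1 ∪ A2 = B1 ∪ B2`, so the four distinct edges `A1, A2, B1, B2` span only `4k < 5k` vertices,
against `(5k-1,4)`-freeness.
-/

open Finset

namespace Finset

variable {α : Type*} [DecidableEq α]

theorem disjoint_union_and_card_union_of_card_add_add_le (s t u : Finset α)
    (h : #s + #t + #u ≤ #(s ∪ t ∪ u)) : Disjoint s (t ∪ u) ∧ #(t ∪ u) = #t + #u := by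
  have hst := card_union_le s (t ∪ u)
  have htu := card_union_le t u
  rw [← union_assoc] at hst
  refine ⟨card_union_eq_card_add_card.mp ?_, by omega⟩
  rw [← union_assoc]
  omega

theorem eq_of_union_eq_union_of_disjoint {s t u : Finset α} (ht : Disjoint s t)
    (hu : Disjoint s u) (h : s ∪ t = s ∪ u) : t = u := by
  rw [← union_sdiff_cancel_left ht, h, union_sdiff_cancel_left hu]

end Finset

/-- Let `H` be a `2k`-uniform hypergraph which is `(6k-1,5)`-free (any 5 distinct
edges have union of size at least `6k`) and `(5k-1,4)`-free (any 4 distinct edges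
have union of size at least `5k`). Then there are no five distinct edges
`C, A1, A2, B1, B2` of `H` with `C ∪ A1 ∪ A2 = C ∪ B1 ∪ B2`. -/
theorem no_case2_configuration {V : Type*} [DecidableEq V]
    (H : Finset (Finset V)) (k : ℕ) (hk : 2 ≤ k)
    (huniform : ∀ A ∈ H, A.card = 2 * k)
    (hfree5 : ∀ S ⊆ H, S.card = 5 → 6 * k ≤ (S.sup id).card)
    (hfree4 : ∀ S ⊆ H, S.card = 4 → 5 * k ≤ (S.sup id).card) :
    ¬ ∃ C A1 A2 B1 B2 : Finset V, C ∈ H ∧ A1 ∈ H ∧ A2 ∈ H ∧ B1 ∈ H ∧ B2 ∈ H ∧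
      ({C, A1, A2, B1, B2} : Finset (Finset V)).card = 5 ∧
      C ∪ A1 ∪ A2 = C ∪ B1 ∪ B2 := by
  rintro ⟨C, A1, A2, B1, B2, hC, hA1, hA2, hB1, hB2, hcard5, heq⟩
  have hsup5 : ({C, A1, A2, B1, B2} : Finset (Finset V)).sup id = C ∪ A1 ∪ A2 := by
    calc _ = (C ∪ A1 ∪ A2) ∪ (C ∪ B1 ∪ B2) := by
          ext
          simp only [sup_insert, sup_singleton, id_eq, sup_eq_union, mem_union]
          tauto
      _ = C ∪ A1 ∪ A2 := by rw [← heq, union_self]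
  have hspan5 := hfree5 _ (by simp [insert_subset_iff, *]) hcard5
  rw [hsup5] at hspan5
  obtain ⟨hCA, hA⟩ := disjoint_union_and_card_union_of_card_add_add_le C A1 A2
    (by rw [huniform C hC, huniform A1 hA1, huniform A2 hA2]; omega)
  obtain ⟨hCB, -⟩ := disjoint_union_and_card_union_of_card_add_add_le C B1 B2
    (by rw [← heq, huniform C hC, huniform B1 hB1, huniform B2 hB2]; omega)
  have hAB : A1 ∪ A2 = B1 ∪ B2 :=
    eq_of_union_eq_union_of_disjoint hCA hCB (by simpa only [union_assoc] using heq)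
  have hcard4 : ({A1, A2, B1, B2} : Finset (Finset V)).card = 4 := by
    have := card_insert_le C {A1, A2, B1, B2}
    have := card_le_four (a := A1) (b := A2) (c := B1) (d := B2)
    omega
  have hspan4 := hfree4 _ (by simp [insert_subset_iff, *]) hcard4
  simp only [sup_insert, sup_singleton, id_eq, sup_eq_union, ← union_assoc] at hspan4
  rw [union_assoc (A1 ∪ A2), ← hAB, union_self, hA, huniform A1 hA1, huniform A2 hA2] at hspan4
  omega
end
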